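/- Let Ω be a compact metric space and B : Ω × S^{2l-1} × ℂ → ℝ defined by Bₙ(z, ω, v) := max{‖Aₙ(z, ω)v‖, ‖A₋ₙ(z, ω)v‖}, where A_z : Ω → SL(2l, ℂ) depends continuously and jointly on (ω, z) (being built from continuous maps D, V : Ω → M(l, ℝ) with D(ω) invertible via the Jacobi cocycle matrix). Then for each fixed n, the function z ↦ sup over (ω, v) ∈ Ω × S^{2l-1} of Bₙ(z, ω, v) is lower semicontinuous, and consequently the set {z ∈ ℂ : sup_{(ω,v)} Bₙ(z, ω, v) > 3/2} is open; in particular, the set {z ∈ ℂ : (T, A_z) ∈ UG} is open in ℂ. -/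

import Mathlib

noncomputable section
open Matrix

variable {Ω : Type*} {ι : Type*} [Fintype ι] [DecidableEq ι]

/-- Forward transfer matrices: `fwd T A n ω = A(Tⁿ⁻¹ω) ⋯ A(ω)`. -/
def fwd (T : Equiv.Perm Ω) (A : Ω → Matrix ι ι ℂ) : ℕ → Ω → Matrix ι ι ℂ
  | 0, _ => 1
  | n + 1, ω => A ((⇑T)^[n] ω) * fwd T A n ω

/-- Backward transfer matrices: `bwd T A n ω = A(T⁻ⁿω)⁻¹ ⋯ A(T⁻¹ω)⁻¹`. -/
def bwd (T : Equiv.Perm Ω) (A : Ω → Matrix ι ι ℂ) : ℕ → Ω → Matrix ι ι ℂ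
  | 0, _ => 1
  | n + 1, ω => (A ((⇑T.symm)^[n + 1] ω))⁻¹ * bwd T A n ω

/-- The transfer matrices `Aₙ(ω)`, `n : ℤ`, of the cocycle `(T, A)`. -/
def transfer (T : Equiv.Perm Ω) (A : Ω → Matrix ι ι ℂ) (n : ℤ) (ω : Ω) : Matrix ι ι ℂ :=
  if 0 ≤ n then fwd T A n.toNat ω else bwd T A (-n).toNat ω

/-- `M.mulVec` regarded as a map of Euclidean spaces. -/
def mv (M : Matrix ι ι ℂ) (v : EuclideanSpace ℂ ι) : EuclideanSpace ℂ ι := WithLp.toLp 2 (M.mulVec v)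

/-- The Jacobi cocycle matrix `A_z(ω) = [[D⁻¹(z − V), −D⁻¹], [D, 0]]`. -/
def jacobiA {l : ℕ} (D V : Matrix (Fin l) (Fin l) ℝ) (z : ℂ) :
    Matrix (Fin l ⊕ Fin l) (Fin l ⊕ Fin l) ℂ :=
  fromBlocks ((D.map Complex.ofReal)⁻¹ * (z • 1 - V.map Complex.ofReal))
    (-(D.map Complex.ofReal)⁻¹) (D.map Complex.ofReal) 0

/-- `Bₙ(z, ω, v) = max (‖Aₙ(z, ω)v‖, ‖A₋ₙ(z, ω)v‖)` for the Jacobi cocycle. -/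
def Bfun {l : ℕ} (T : Equiv.Perm Ω) (D V : Ω → Matrix (Fin l) (Fin l) ℝ) (n : ℕ) (z : ℂ)
    (ω : Ω) (v : EuclideanSpace ℂ (Fin l ⊕ Fin l)) : ℝ :=
  max ‖mv (transfer T (fun ω' => jacobiA (D ω') (V ω') z) (n : ℤ) ω) v‖
    ‖mv (transfer T (fun ω' => jacobiA (D ω') (V ω') z) (-(n : ℤ)) ω) v‖

/-- The uniform exponential growth condition for the Jacobi cocycle at energy `z`. -/
def UG {l : ℕ} (T : Equiv.Perm Ω) (D V : Ω → Matrix (Fin l) (Fin l) ℝ) (z : ℂ) : Prop :=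
  ∃ β : ℝ, 0 < β ∧ ∃ lam : ℝ, 1 < lam ∧
    ∀ (ω : Ω) (v : EuclideanSpace ℂ (Fin l ⊕ Fin l)), v ≠ 0 →
      (∀ n : ℕ, β * lam ^ n * ‖v‖ ≤
        ‖mv (transfer T (fun ω' => jacobiA (D ω') (V ω') z) (n : ℤ) ω) v‖) ∨
      (∀ n : ℕ, β * lam ^ n * ‖v‖ ≤
        ‖mv (transfer T (fun ω' => jacobiA (D ω') (V ω') z) (-(n : ℤ)) ω) v‖)

/-!
`Bₙ(z, ω, v)` is jointly continuous in `(z, ω, v)`, so its supremum over the compact set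
`Ω × S` is lower semicontinuous in `z`, and the condition `c < Bₙ(z, ·, ·)` on all of `Ω × S`
is open in `z`. Uniform growth at `z` gives such an `n` with `c = 3/2`.
Conversely, suppose every `v` is expanded by `c > 1` by `Aₙ(ω)` or by `A₋ₙ(ω)`. If `Aₙ(ω)`
expands `v`, then `Aₙ(Tⁿω)` expands `w = Aₙ(ω)v`, since `A₋ₙ(Tⁿω)` maps `w` back to `v`.
Iterating, `‖A_{kn}(ω)v‖ ≥ cᵏ‖v‖`, and a uniform bound on `A_j`, `j ≤ n`, fills in the times
between multiples of `n`. The backward case is the forward case of the inverse cocycle.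
-/

theorem fwd_add (T : Equiv.Perm Ω) (A : Ω → Matrix ι ι ℂ) (a b : ℕ) (ω : Ω) :
    fwd T A (a + b) ω = fwd T A a ((⇑T)^[b] ω) * fwd T A b ω := by
  induction a with
  | zero => simp [fwd]
  | succ a ih =>
    rw [Nat.add_right_comm, fwd, ih, fwd, Function.iterate_add_apply, Matrix.mul_assoc]

theorem bwd_iterate_mul_fwd (T : Equiv.Perm Ω) {A : Ω → Matrix ι ι ℂ}
    (hA : ∀ ω, IsUnit (A ω).det) (n : ℕ) (ω : Ω) :
    bwd T A n ((⇑T)^[n] ω) * fwd T A n ω = 1 := by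
  induction n generalizing ω with
  | zero => simp [fwd, bwd]
  | succ n ih =>
    have hfwd : fwd T A (n + 1) ω = fwd T A n (T ω) * A ω := by
      rw [fwd_add]; simp [fwd]
    rw [hfwd, bwd, Function.LeftInverse.iterate T.symm_apply_apply, Function.iterate_succ_apply,
      Matrix.mul_assoc, ← Matrix.mul_assoc (bwd T A n _), ih, Matrix.one_mul,
      nonsing_inv_mul _ (hA ω)]

def reverseCocycle (T : Equiv.Perm Ω) (A : Ω → Matrix ι ι ℂ) (ω : Ω) : Matrix ι ι ℂ :=
  (A (T.symm ω))⁻¹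

theorem isUnit_det_reverseCocycle {T : Equiv.Perm Ω} {A : Ω → Matrix ι ι ℂ}
    (hA : ∀ ω, IsUnit (A ω).det) (ω : Ω) : IsUnit (reverseCocycle T A ω).det :=
  isUnit_nonsing_inv_det _ (hA _)

theorem fwd_symm_reverseCocycle (T : Equiv.Perm Ω) (A : Ω → Matrix ι ι ℂ) :
    fwd T.symm (reverseCocycle T A) = bwd T A := by
  ext n ω : 2
  induction n with
  | zero => rfl
  | succ n ih => rw [fwd, bwd, ih, reverseCocycle, Function.iterate_succ_apply']

theorem bwd_symm_reverseCocycle (T : Equiv.Perm Ω) {A : Ω → Matrix ι ι ℂ}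
    (hA : ∀ ω, IsUnit (A ω).det) : bwd T.symm (reverseCocycle T A) = fwd T A := by
  ext n ω : 2
  induction n with
  | zero => rfl
  | succ n ih =>
    rw [bwd, fwd, ih, reverseCocycle, Equiv.symm_symm, Function.iterate_succ_apply',
      T.symm_apply_apply, Matrix.nonsing_inv_nonsing_inv _ (hA _)]

theorem transfer_natCast (T : Equiv.Perm Ω) (A : Ω → Matrix ι ι ℂ) (n : ℕ) (ω : Ω) :
    transfer T A n ω = fwd T A n ω := by
  simp [transfer]

theorem transfer_neg_natCast (T : Equiv.Perm Ω) (A : Ω → Matrix ι ι ℂ) (n : ℕ) (ω : Ω) :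
    transfer T A (-n) ω = bwd T A n ω := by
  cases n with
  | zero => rfl
  | succ n => rw [transfer, if_neg (by omega)]; simp

omit [DecidableEq ι] in
theorem mv_mul (M N : Matrix ι ι ℂ) (v : EuclideanSpace ℂ ι) : mv (M * N) v = mv M (mv N v) := by
  simp [mv, Matrix.mulVec_mulVec]

theorem mv_one (v : EuclideanSpace ℂ ι) : mv 1 v = v := by
  simp [mv]

omit [DecidableEq ι] in
theorem norm_mv_smul (M : Matrix ι ι ℂ) (r : ℂ) (v : EuclideanSpace ℂ ι) :
    ‖mv M (r • v)‖ = ‖r‖ * ‖mv M v‖ := by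
  simp [mv, Matrix.mulVec_smul, norm_smul]

omit [DecidableEq ι] in
theorem Continuous.mv {X : Type*} [TopologicalSpace X] {M : X → Matrix ι ι ℂ}
    {v : X → EuclideanSpace ℂ ι} (hM : Continuous M) (hv : Continuous v) :
    Continuous fun x => mv (M x) (v x) :=
  (PiLp.continuous_toLp 2 _).comp (hM.matrix_mulVec ((PiLp.continuous_ofLp 2 _).comp hv))

section Expansion

variable {T : Equiv.Perm Ω} {A : Ω → Matrix ι ι ℂ} {n : ℕ} {c : ℝ}

theorem mul_norm_le_norm_fwd_iterate (hA : ∀ ω, IsUnit (A ω).det) (hc : 1 < c)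
    (hexp : ∀ ω v, c * ‖v‖ ≤ max ‖mv (fwd T A n ω) v‖ ‖mv (bwd T A n ω) v‖)
    {ω : Ω} {v : EuclideanSpace ℂ ι} (hv : c * ‖v‖ ≤ ‖mv (fwd T A n ω) v‖) :
    c * ‖mv (fwd T A n ω) v‖ ≤ ‖mv (fwd T A n ((⇑T)^[n] ω)) (mv (fwd T A n ω) v)‖ := by
  set w := mv (fwd T A n ω) v
  have hback : mv (bwd T A n ((⇑T)^[n] ω)) w = v := by
    rw [← mv_mul, bwd_iterate_mul_fwd T hA, mv_one]
  rcases le_max_iff.mp (hexp ((⇑T)^[n] ω) w) with h | h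
  · exact h
  · -- `c ‖w‖ ≤ ‖v‖ ≤ ‖w‖ / c` forces `w = 0`
    rw [hback] at h
    nlinarith [norm_nonneg w, norm_nonneg (mv (fwd T A n ((⇑T)^[n] ω)) w)]

theorem pow_mul_norm_le_norm_fwd_mul (hA : ∀ ω, IsUnit (A ω).det) (hc : 1 < c)
    (hexp : ∀ ω v, c * ‖v‖ ≤ max ‖mv (fwd T A n ω) v‖ ‖mv (bwd T A n ω) v‖) (k : ℕ)
    {ω : Ω} {v : EuclideanSpace ℂ ι} (hv : c * ‖v‖ ≤ ‖mv (fwd T A n ω) v‖) :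
    c ^ k * ‖v‖ ≤ ‖mv (fwd T A (k * n) ω) v‖ := by
  induction k generalizing ω v with
  | zero => simp [fwd, mv_one]
  | succ k ih =>
    calc c ^ (k + 1) * ‖v‖ = c ^ k * (c * ‖v‖) := by ring
      _ ≤ c ^ k * ‖mv (fwd T A n ω) v‖ := by gcongr
      _ ≤ ‖mv (fwd T A (k * n) ((⇑T)^[n] ω)) (mv (fwd T A n ω) v)‖ :=
        ih (mul_norm_le_norm_fwd_iterate hA hc hexp hv)
      _ = ‖mv (fwd T A ((k + 1) * n) ω) v‖ := by rw [Nat.succ_mul, fwd_add, mv_mul]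

theorem fwd_exponential_growth (hA : ∀ ω, IsUnit (A ω).det) (hn : n ≠ 0) (hc : 1 < c) {C : ℝ} (hC : 0 < C)
    (hbound : ∀ j ≤ n, ∀ ω v, ‖mv (fwd T A j ω) v‖ ≤ C * ‖v‖)
    (hexp : ∀ ω v, c * ‖v‖ ≤ max ‖mv (fwd T A n ω) v‖ ‖mv (bwd T A n ω) v‖)
    {ω : Ω} {v : EuclideanSpace ℂ ι} (hv : c * ‖v‖ ≤ ‖mv (fwd T A n ω) v‖) (m : ℕ) :
    C⁻¹ * (c ^ (n⁻¹ : ℝ)) ^ m * ‖v‖ ≤ ‖mv (fwd T A m ω) v‖ := by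
  set k := m / n
  have hm : m < k * n + n := Nat.lt_div_mul_add (Nat.pos_of_ne_zero hn)
  have hkn : k * n ≤ m := Nat.div_mul_le_self m n
  obtain ⟨j, hj, hjm⟩ : ∃ j ≤ n, (k + 1) * n = j + m :=
    ⟨(k + 1) * n - m, by rw [Nat.succ_mul]; omega, by rw [Nat.succ_mul]; omega⟩
  have hrate : (c ^ (n⁻¹ : ℝ)) ^ m ≤ c ^ (k + 1) :=
    calc (c ^ (n⁻¹ : ℝ)) ^ m ≤ (c ^ (n⁻¹ : ℝ)) ^ ((k + 1) * n) :=
          pow_le_pow_right₀ (Real.one_le_rpow hc.le (by positivity)) (by rw [Nat.succ_mul]; omega)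
      _ = c ^ (k + 1) := by rw [mul_comm, pow_mul, Real.rpow_inv_natCast_pow (by linarith) hn]
  rw [mul_assoc, inv_mul_le_iff₀ hC]
  calc (c ^ (n⁻¹ : ℝ)) ^ m * ‖v‖ ≤ c ^ (k + 1) * ‖v‖ := by gcongr
    _ ≤ ‖mv (fwd T A ((k + 1) * n) ω) v‖ := pow_mul_norm_le_norm_fwd_mul hA hc hexp (k + 1) hv
    _ ≤ C * ‖mv (fwd T A m ω) v‖ := by rw [hjm, fwd_add, mv_mul]; exact hbound j hj _ _

theorem exists_uniform_growth (hA : ∀ ω, IsUnit (A ω).det) (hn : n ≠ 0) (hc : 1 < c) {C : ℝ}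
    (hC : 0 < C)
    (hbound : ∀ j ≤ n, ∀ ω v, max ‖mv (fwd T A j ω) v‖ ‖mv (bwd T A j ω) v‖ ≤ C * ‖v‖)
    (hexp : ∀ ω v, c * ‖v‖ ≤ max ‖mv (fwd T A n ω) v‖ ‖mv (bwd T A n ω) v‖) :
    ∃ β : ℝ, 0 < β ∧ ∃ lam : ℝ, 1 < lam ∧ ∀ (ω : Ω) (v : EuclideanSpace ℂ ι),
      (∀ m : ℕ, β * lam ^ m * ‖v‖ ≤ ‖mv (fwd T A m ω) v‖) ∨
      (∀ m : ℕ, β * lam ^ m * ‖v‖ ≤ ‖mv (bwd T A m ω) v‖) := by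
  refine ⟨C⁻¹, inv_pos.2 hC, c ^ (n⁻¹ : ℝ), Real.one_lt_rpow hc (by positivity), fun ω v => ?_⟩
  rcases le_max_iff.mp (hexp ω v) with h | h
  · exact .inl (fwd_exponential_growth hA hn hc hC
      (fun j hj ω v => (le_max_left _ _).trans (hbound j hj ω v)) hexp h)
  · right
    rw [← fwd_symm_reverseCocycle] at h ⊢
    refine fwd_exponential_growth (isUnit_det_reverseCocycle hA) hn hc hC (fun j hj ω v => ?_) (fun ω v => ?_) h
    · rw [fwd_symm_reverseCocycle]
      exact (le_max_right _ _).trans (hbound j hj ω v)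
    · rw [fwd_symm_reverseCocycle, bwd_symm_reverseCocycle T hA, max_comm]
      exact hexp ω v

end Expansion

theorem Continuous.matrix_inv {X R : Type*} [TopologicalSpace X] [Field R] [TopologicalSpace R]
    [IsTopologicalDivisionRing R] {A : X → Matrix ι ι R} (hA : Continuous A)
    (h : ∀ x, IsUnit (A x).det) : Continuous fun x => (A x)⁻¹ := by
  refine continuous_iff_continuousAt.2 fun x => (continuousAt_matrix_inv _ ?_).comp hA.continuousAt
  rw [Ring.inverse_eq_inv']
  exact continuousAt_inv₀ (h x).ne_zero

section Continuity

variable {P : Type*} [TopologicalSpace P] [TopologicalSpace Ω] {A : P → Ω → Matrix ι ι ℂ}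

theorem continuous_fwd (T : Ω ≃ₜ Ω) (hA : Continuous (Function.uncurry A)) (n : ℕ) :
    Continuous fun p : P × Ω => fwd T.toEquiv (A p.1) n p.2 := by
  induction n with
  | zero => exact continuous_const
  | succ n ih =>
    exact (hA.comp (continuous_fst.prodMk ((T.continuous.iterate n).comp continuous_snd))).mul ih

theorem continuous_bwd (T : Ω ≃ₜ Ω) (hA : Continuous (Function.uncurry A))
    (hdet : ∀ p ω, IsUnit (A p ω).det) (n : ℕ) :
    Continuous fun p : P × Ω => bwd T.toEquiv (A p.1) n p.2 := by
  induction n with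
  | zero => exact continuous_const
  | succ n ih =>
    have hstep := hA.comp (continuous_fst.prodMk
      ((T.symm.continuous.iterate (n + 1)).comp continuous_snd))
    exact (hstep.matrix_inv fun _ => hdet _ _).mul ih

end Continuity

theorem lowerSemicontinuous_iSup_of_continuous {X Y : Type*} [TopologicalSpace X]
    [TopologicalSpace Y] [CompactSpace Y] {f : X → Y → ℝ} (hf : Continuous (Function.uncurry f)) :
    LowerSemicontinuous fun x => ⨆ y, f x y :=
  lowerSemicontinuous_ciSup (fun x => (isCompact_range (hf.comp (.prodMk_right x))).bddAbove)
    fun y => (hf.comp (.prodMk_left y)).lowerSemicontinuous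

theorem isOpen_setOf_forall_lt {X Y : Type*} [TopologicalSpace X] [TopologicalSpace Y]
    [CompactSpace Y] {f : X → Y → ℝ} (hf : Continuous (Function.uncurry f)) (a : ℝ) :
    IsOpen {x | ∀ y, a < f x y} := by
  -- the complement is the projection of the closed set `{(x, y) | f x y ≤ a}`
  have := isClosedMap_fst_of_compactSpace _ (isClosed_le hf (continuous_const (y := a)))
  convert this.isOpen_compl using 1
  ext x
  simp [Function.uncurry]

section Homogeneous

variable {𝕜 E : Type*} [RCLike 𝕜] [NormedAddCommGroup E] [NormedSpace 𝕜 E] {f : E → ℝ}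

theorem mul_norm_le_of_forall_norm_eq_one (hf : ∀ (r : 𝕜) v, f (r • v) = ‖r‖ * f v) {a : ℝ}
    (h : ∀ u, ‖u‖ = 1 → a ≤ f u) (v : E) : a * ‖v‖ ≤ f v := by
  by_cases hv : v = 0
  · simp [hv, by simpa using hf 0 0]
  · have hu := h _ (norm_smul_inv_norm (𝕜 := 𝕜) hv)
    rw [hf, norm_inv, RCLike.norm_ofReal, abs_norm, inv_mul_eq_div,
      le_div_iff₀ (norm_pos_iff.2 hv)] at hu
    exact hu

theorem le_mul_norm_of_forall_norm_eq_one (hf : ∀ (r : 𝕜) v, f (r • v) = ‖r‖ * f v) {a : ℝ}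
    (h : ∀ u, ‖u‖ = 1 → f u ≤ a) (v : E) : f v ≤ a * ‖v‖ := by
  have := mul_norm_le_of_forall_norm_eq_one (𝕜 := 𝕜) (f := fun v => -f v) (by simp [hf]) (a := -a)
    (fun u hu => neg_le_neg (h u hu)) v
  linarith

end Homogeneous

theorem isUnit_det_map_ofReal {D : Matrix ι ι ℝ} (h : IsUnit D.det) :
    IsUnit (D.map Complex.ofReal).det := by
  have := h.map Complex.ofRealHom
  rwa [RingHom.map_det] at this

theorem isUnit_det_jacobiA {l : ℕ} {D : Matrix (Fin l) (Fin l) ℝ} (hD : IsUnit D.det)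
    (V : Matrix (Fin l) (Fin l) ℝ) (z : ℂ) : IsUnit (jacobiA D V z).det := by
  have hD' := isUnit_det_map_ofReal hD
  refine isUnit_det_of_right_inverse (B := fromBlocks 0 (D.map Complex.ofReal)⁻¹
    (-D.map Complex.ofReal) ((z • 1 - V.map Complex.ofReal) * (D.map Complex.ofReal)⁻¹)) ?_
  rw [jacobiA, fromBlocks_multiply]
  simp only [Matrix.mul_zero, Matrix.zero_mul, Matrix.neg_mul, Matrix.mul_neg, neg_neg, zero_add,
    add_zero, Matrix.mul_assoc, nonsing_inv_mul _ hD', mul_nonsing_inv _ hD', add_neg_cancel]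
  exact fromBlocks_one

section Jacobi

variable {l : ℕ} {D V : Ω → Matrix (Fin l) (Fin l) ℝ}

theorem continuous_jacobiA [TopologicalSpace Ω] (hD : Continuous D) (hV : Continuous V)
    (hDinv : ∀ ω, IsUnit (D ω).det) :
    Continuous (Function.uncurry fun (z : ℂ) ω => jacobiA (D ω) (V ω) z) := by
  have hD' : Continuous fun p : ℂ × Ω => (D p.2).map Complex.ofReal :=
    (hD.comp continuous_snd).matrix_map Complex.continuous_ofReal
  have hV' : Continuous fun p : ℂ × Ω => (V p.2).map Complex.ofReal :=
    (hV.comp continuous_snd).matrix_map Complex.continuous_ofReal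
  have hDinv' := hD'.matrix_inv fun p => isUnit_det_map_ofReal (hDinv p.2)
  exact (hDinv'.mul ((continuous_fst.smul continuous_const).sub hV')).matrix_fromBlocks
    hDinv'.neg hD' continuous_const

theorem Bfun_eq_max (T : Equiv.Perm Ω) (D V : Ω → Matrix (Fin l) (Fin l) ℝ) (n : ℕ) (z : ℂ)
    (ω : Ω) (v : EuclideanSpace ℂ (Fin l ⊕ Fin l)) :
    Bfun T D V n z ω v = max ‖mv (fwd T (fun ω' => jacobiA (D ω') (V ω') z) n ω) v‖
      ‖mv (bwd T (fun ω' => jacobiA (D ω') (V ω') z) n ω) v‖ := by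
  rw [Bfun, transfer_natCast, transfer_neg_natCast]

theorem Bfun_smul (T : Equiv.Perm Ω) (D V : Ω → Matrix (Fin l) (Fin l) ℝ) (n : ℕ) (z : ℂ)
    (ω : Ω) (r : ℂ) (v : EuclideanSpace ℂ (Fin l ⊕ Fin l)) :
    Bfun T D V n z ω (r • v) = ‖r‖ * Bfun T D V n z ω v := by
  simp only [Bfun, norm_mv_smul, mul_max_of_nonneg _ _ (norm_nonneg r)]

theorem continuous_Bfun [TopologicalSpace Ω] (T : Ω ≃ₜ Ω) (hD : Continuous D)
    (hV : Continuous V) (hDinv : ∀ ω, IsUnit (D ω).det) (n : ℕ) {X : Type*} [TopologicalSpace X]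
    {z : X → ℂ} {ω : X → Ω} {v : X → EuclideanSpace ℂ (Fin l ⊕ Fin l)} (hz : Continuous z)
    (hω : Continuous ω) (hv : Continuous v) :
    Continuous fun x => Bfun T.toEquiv D V n (z x) (ω x) (v x) := by
  simp only [Bfun_eq_max]
  have hA := continuous_jacobiA hD hV hDinv
  have hdet z ω := isUnit_det_jacobiA (hDinv ω) (V ω) z
  exact (((continuous_fwd T hA n).comp (hz.prodMk hω)).mv hv).norm.max
    (((continuous_bwd T hA hdet n).comp (hz.prodMk hω)).mv hv).norm

theorem exists_Bfun_le [TopologicalSpace Ω] [CompactSpace Ω] (T : Ω ≃ₜ Ω) (hD : Continuous D)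
    (hV : Continuous V) (hDinv : ∀ ω, IsUnit (D ω).det) (n : ℕ) (z : ℂ) :
    ∃ C : ℝ, 0 < C ∧ ∀ j ≤ n, ∀ ω v, Bfun T.toEquiv D V j z ω v ≤ C * ‖v‖ := by
  have hcont : Continuous fun q : Fin (n + 1) × Ω × Metric.sphere
      (0 : EuclideanSpace ℂ (Fin l ⊕ Fin l)) 1 => Bfun T.toEquiv D V q.1 z q.2.1 q.2.2 :=
    continuous_prod_of_discrete_left.2 fun j => continuous_Bfun T hD hV hDinv j
      continuous_const continuous_fst (continuous_subtype_val.comp continuous_snd)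
  obtain ⟨C, hC1, hC⟩ := (isCompact_range hcont).bddAbove.exists_ge 1
  refine ⟨C, by positivity, fun j hj ω =>
    le_mul_norm_of_forall_norm_eq_one (Bfun_smul _ D V j z ω) fun u hu => ?_⟩
  have hu' : u ∈ Metric.sphere (0 : EuclideanSpace ℂ (Fin l ⊕ Fin l)) 1 := by simpa using hu
  have hle := hC _ (Set.mem_range_self (⟨j, Nat.lt_succ_of_le hj⟩, ω, ⟨u, hu'⟩))
  exact hle

theorem UG_of_forall_le_Bfun [TopologicalSpace Ω] [CompactSpace Ω] (T : Ω ≃ₜ Ω)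
    (hD : Continuous D) (hV : Continuous V) (hDinv : ∀ ω, IsUnit (D ω).det) {n : ℕ}
    (hn : n ≠ 0) {c : ℝ} (hc : 1 < c) {z : ℂ}
    (h : ∀ ω v, ‖v‖ = 1 → c ≤ Bfun T.toEquiv D V n z ω v) : UG T.toEquiv D V z := by
  obtain ⟨C, hC, hbound⟩ := exists_Bfun_le T hD hV hDinv n z
  have hexp : ∀ ω v, c * ‖v‖ ≤ Bfun T.toEquiv D V n z ω v := fun ω =>
    mul_norm_le_of_forall_norm_eq_one (Bfun_smul _ D V n z ω) (h ω)
  simp only [Bfun_eq_max] at hbound hexp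
  obtain ⟨β, hβ, lam, hlam, hgrowth⟩ := exists_uniform_growth
    (fun ω => isUnit_det_jacobiA (hDinv ω) (V ω) z) hn hc hC hbound hexp
  refine ⟨β, hβ, lam, hlam, fun ω v _ => ?_⟩
  simpa only [transfer_natCast, transfer_neg_natCast] using hgrowth ω v

theorem exists_lt_Bfun_of_UG {T : Equiv.Perm Ω} {z : ℂ} (hz : UG T D V z) (a : ℝ) :
    ∃ n ≠ 0, ∀ ω v, ‖v‖ = 1 → a < Bfun T D V n z ω v := by
  obtain ⟨β, hβ, lam, hlam, hgrowth⟩ := hz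
  obtain ⟨n, hn⟩ := pow_unbounded_of_one_lt (a / β) hlam
  have hlarge : a < β * lam ^ (n + 1) := by
    rw [div_lt_iff₀' hβ] at hn
    exact hn.trans_le (mul_le_mul_of_nonneg_left (pow_le_pow_right₀ hlam.le n.le_succ) hβ.le)
  refine ⟨n + 1, n.succ_ne_zero, fun ω v hv => ?_⟩
  rw [Bfun]
  rcases hgrowth ω v (by rintro rfl; simp at hv) with h | h
  · exact hlarge.trans_le (by simpa [hv] using (h (n + 1)).trans (le_max_left _ _))
  · exact hlarge.trans_le (by simpa [hv] using (h (n + 1)).trans (le_max_right _ _))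

theorem UG_iff_exists_forall_lt_Bfun [TopologicalSpace Ω] [CompactSpace Ω] (T : Ω ≃ₜ Ω)
    (hD : Continuous D) (hV : Continuous V) (hDinv : ∀ ω, IsUnit (D ω).det) {c : ℝ} (hc : 1 < c)
    (z : ℂ) :
    UG T.toEquiv D V z ↔ ∃ n ≠ 0, ∀ p : Ω × Metric.sphere (0 : EuclideanSpace ℂ (Fin l ⊕ Fin l)) 1,
      c < Bfun T.toEquiv D V n z p.1 p.2 := by
  constructor
  · intro hz
    obtain ⟨n, hn, h⟩ := exists_lt_Bfun_of_UG hz c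
    exact ⟨n, hn, fun p => h p.1 p.2 (norm_eq_of_mem_sphere p.2)⟩
  · rintro ⟨n, hn, h⟩
    exact UG_of_forall_le_Bfun T hD hV hDinv hn hc fun ω v hv => (h (ω, ⟨v, by simpa using hv⟩)).le

end Jacobi

/-- lower semicontinuity in `z` of `sup_{(ω,v)} Bₙ(z, ω, v)`, openness of
the finite-time expansion condition, and openness of the set of energies where the
Jacobi cocycle satisfies uniform exponential growth. -/
theorem stmt5 {l : ℕ} [MetricSpace Ω] [CompactSpace Ω] (T : Ω ≃ₜ Ω)
    (D V : Ω → Matrix (Fin l) (Fin l) ℝ) (hD : Continuous D) (hV : Continuous V)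
    (hDinv : ∀ ω, IsUnit (D ω).det) :
    (∀ n : ℕ, LowerSemicontinuous (fun z : ℂ =>
      ⨆ p : Ω × Metric.sphere (0 : EuclideanSpace ℂ (Fin l ⊕ Fin l)) 1,
        Bfun T.toEquiv D V n z p.1 (p.2 : EuclideanSpace ℂ (Fin l ⊕ Fin l)))) ∧
    (∀ n : ℕ, IsOpen {z : ℂ |
      3 / 2 < ⨆ p : Ω × Metric.sphere (0 : EuclideanSpace ℂ (Fin l ⊕ Fin l)) 1,
        Bfun T.toEquiv D V n z p.1 (p.2 : EuclideanSpace ℂ (Fin l ⊕ Fin l))}) ∧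
    IsOpen {z : ℂ | UG T.toEquiv D V z} := by
  have hB n : Continuous (Function.uncurry fun (z : ℂ)
      (p : Ω × Metric.sphere (0 : EuclideanSpace ℂ (Fin l ⊕ Fin l)) 1) =>
        Bfun T.toEquiv D V n z p.1 p.2) :=
    continuous_Bfun T hD hV hDinv n continuous_fst (continuous_fst.comp continuous_snd)
      (continuous_subtype_val.comp (continuous_snd.comp continuous_snd))
  have hlsc := fun n => lowerSemicontinuous_iSup_of_continuous (hB n)
  refine ⟨hlsc, fun n => (hlsc n).isOpen_preimage (3 / 2), ?_⟩
  convert isOpen_iUnion fun n => isOpen_iUnion fun (_ : n ≠ 0) =>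
    isOpen_setOf_forall_lt (hB n) (3 / 2) using 1
  ext z
  simpa only [Set.mem_ofPred_eq, Set.mem_iUnion, exists_prop] using
    UG_iff_exists_forall_lt_Bfun T hD hV hDinv (by norm_num : (1 : ℝ) < 3 / 2) z
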